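/- Let Λ be a real diagonal N×N matrix with nonpositive entries, ω > 0, τ > 0, and define the 2N×2N block matrix V = τ · [[0, I],[ω²Λ, 0]]. Then exp(V) = [[cos(τω√(-Λ)), sinc-block],[−ω√(-Λ) sin(τω√(-Λ)), cos(τω√(-Λ))]], where the (1,2)-block is (ω√(-Λ))^{-1}sin(τω√(-Λ)) interpreted via the entire function sin(x)/x on each diagonal entry. -/

import Mathlib

open Matrix NormedSpace

open scoped Nat

/-- `sinc x = sin x / x`, with `sinc 0 = 1`. -/
noncomputable def sinc (x : ℝ) : ℝ := if x = 0 then 1 else Real.sin x / x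

section Aux

attribute [local instance] Matrix.linftyOpNormedRing Matrix.linftyOpNormedAlgebra

lemma hasSum_sinc (s : ℝ) :
    HasSum (fun k : ℕ => (-1 : ℝ) ^ k * s ^ (2 * k) / (2 * k + 1)!) (sinc s) := by
  rcases eq_or_ne s 0 with rfl | hs
  · have h1 : sinc 0 = (-1 : ℝ) ^ 0 * (0 : ℝ) ^ (2 * 0) / (2 * 0 + 1)! := by
      simp [sinc]
    rw [h1]
    refine hasSum_single 0 fun k hk => ?_
    have h2 : 2 * k ≠ 0 := by omega
    simp [zero_pow h2]
  · have h := (Real.hasSum_sin s).div_const s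
    have hval : Real.sin s / s = sinc s := by simp [sinc, hs]
    rw [hval] at h
    convert h using 2 with k
    · rfl
    rw [pow_succ]
    field_simp

lemma exp_of_sq {𝔸 : Type*} [NormedRing 𝔸] [NormedAlgebra ℝ 𝔸] [CompleteSpace 𝔸]
    (A : 𝔸) (s : ℝ) (h : A ^ 2 = (-(s ^ 2)) • (1 : 𝔸)) :
    NormedSpace.exp A = Real.cos s • (1 : 𝔸) + sinc s • A := by
  rw [exp_eq_tsum (𝕂 := ℝ)]
  refine HasSum.tsum_eq (HasSum.even_add_odd ?_ ?_)
  · have hc := (Real.hasSum_cos s).smul_const (1 : 𝔸)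
    convert hc using 2 with k
    rw [pow_mul, h, smul_pow, one_pow, smul_smul]
    congr 1
    rw [neg_pow, ← pow_mul, mul_comm ((-1 : ℝ) ^ k), div_eq_mul_inv]
    ring
  · have hsum := (hasSum_sinc s).smul_const A
    convert hsum using 2 with k
    rw [pow_succ, pow_mul, h, smul_pow, one_pow, smul_mul_assoc, one_mul, smul_smul]
    congr 1
    rw [neg_pow, ← pow_mul, mul_comm ((-1 : ℝ) ^ k), div_eq_mul_inv]
    ring

/-- The per-mode 2×2 matrix. -/
def A2 (τ ω dj : ℝ) : Matrix (Fin 2) (Fin 2) ℝ := !![0, τ; τ * ω ^ 2 * dj, 0]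

lemma A2_sq (τ ω dj : ℝ) (hdj : dj ≤ 0) :
    (A2 τ ω dj) ^ 2 = (-((τ * ω * Real.sqrt (-dj)) ^ 2)) • (1 : Matrix (Fin 2) (Fin 2) ℝ) := by
  have hsq : Real.sqrt (-dj) ^ 2 = -dj := Real.sq_sqrt (by linarith)
  rw [pow_two]
  ext i j
  fin_cases i <;> fin_cases j <;>
    simp [A2, Matrix.mul_apply, Fin.sum_univ_two, Matrix.one_apply, mul_pow, hsq] <;> ring

lemma exp_A2 (τ ω dj : ℝ) (hdj : dj ≤ 0) (hω : 0 < ω) (hτ : 0 < τ) :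
    NormedSpace.exp (A2 τ ω dj) =
      !![Real.cos (τ * ω * Real.sqrt (-dj)), τ * sinc (τ * ω * Real.sqrt (-dj));
         -(ω * Real.sqrt (-dj)) * Real.sin (τ * ω * Real.sqrt (-dj)),
         Real.cos (τ * ω * Real.sqrt (-dj))] := by
  set s := τ * ω * Real.sqrt (-dj) with hs
  have h := exp_of_sq (A2 τ ω dj) s (A2_sq τ ω dj hdj)
  refine h.trans ?_
  have hkey : sinc s * (τ * ω ^ 2 * dj) = -(ω * Real.sqrt (-dj)) * Real.sin s := by
    rcases eq_or_lt_of_le hdj with h0 | hdj'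
    · subst h0
      simp [sinc, hs]
    · have hroot : 0 < Real.sqrt (-dj) := Real.sqrt_pos.mpr (by linarith)
      have hsne : s ≠ 0 := by positivity
      have hsq : Real.sqrt (-dj) * Real.sqrt (-dj) = -dj :=
        Real.mul_self_sqrt (by linarith)
      have hdj2 : dj = -(Real.sqrt (-dj) * Real.sqrt (-dj)) := by linarith
      rw [sinc, if_neg hsne]
      rw [hs]
      rw [hdj2]
      have hτωne : τ * ω * Real.sqrt (-dj) ≠ 0 := by rw [← hs]; exact hsne
      field_simp
      rw [Real.sqrt_sq hroot.le]
  ext i j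
  fin_cases i <;> fin_cases j <;>
    simp [A2, Matrix.one_apply] <;> linarith [hkey]

end Aux

section Hom

attribute [local instance] Matrix.linftyOpNormedRing Matrix.linftyOpNormedAlgebra

variable (N : ℕ)

/-- The ring homomorphism sending a family of 2×2 matrices to a 2N×2N matrix whose
blocks are the diagonals of the entries. -/
noncomputable def psiRing : (Fin N → Matrix (Fin 2) (Fin 2) ℝ) →+*
    Matrix (Fin N ⊕ Fin N) (Fin N ⊕ Fin N) ℝ where
  toFun f := Matrix.fromBlocks
      (Matrix.diagonal fun j => f j 0 0) (Matrix.diagonal fun j => f j 0 1)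
      (Matrix.diagonal fun j => f j 1 0) (Matrix.diagonal fun j => f j 1 1)
  map_one' := by
    ext i j
    cases i <;> cases j <;>
      simp [Matrix.diagonal_apply, Matrix.one_apply, Sum.inl.injEq, Sum.inr.injEq]
  map_mul' f g := by
    rw [Matrix.fromBlocks_multiply]
    ext i j
    cases i <;> cases j <;>
      simp [Matrix.diagonal_apply, Matrix.mul_apply, Fin.sum_univ_two, Finset.sum_ite_eq,
        Finset.sum_ite_eq']
  map_zero' := by
    simp only [Pi.zero_apply, Matrix.zero_apply, Matrix.diagonal_zero,
      Matrix.fromBlocks_zero]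
  map_add' f g := by
    simp only [Pi.add_apply, Matrix.add_apply, ← Matrix.diagonal_add,
      Matrix.fromBlocks_add]

/-- `psiRing` as an `ℝ`-algebra homomorphism. -/
noncomputable def psi : (Fin N → Matrix (Fin 2) (Fin 2) ℝ) →ₐ[ℝ]
    Matrix (Fin N ⊕ Fin N) (Fin N ⊕ Fin N) ℝ :=
  AlgHom.mk' (psiRing N) fun c f => by
    show Matrix.fromBlocks _ _ _ _ = c • Matrix.fromBlocks _ _ _ _
    rw [Matrix.fromBlocks_smul]
    ext i j
    cases i <;> cases j <;> simp [Matrix.diagonal_apply]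

lemma psi_apply (f : Fin N → Matrix (Fin 2) (Fin 2) ℝ) :
    psi N f = Matrix.fromBlocks
      (Matrix.diagonal fun j => f j 0 0) (Matrix.diagonal fun j => f j 0 1)
      (Matrix.diagonal fun j => f j 1 0) (Matrix.diagonal fun j => f j 1 1) := rfl

lemma psi_continuous : Continuous (psi N) :=
  LinearMap.continuous_of_finiteDimensional ((psi N).toLinearMap : _ →ₗ[ℝ] _)

end Hom

section Final

attribute [local instance] Matrix.linftyOpNormedRing Matrix.linftyOpNormedAlgebra

theorem stmt_15 (N : ℕ) (d : Fin N → ℝ) (hd : ∀ j, d j ≤ 0)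
    (ω τ : ℝ) (hω : 0 < ω) (hτ : 0 < τ) :
    NormedSpace.exp (τ • Matrix.fromBlocks (0 : Matrix (Fin N) (Fin N) ℝ) (1 : Matrix (Fin N) (Fin N) ℝ)
        (ω ^ 2 • Matrix.diagonal d) (0 : Matrix (Fin N) (Fin N) ℝ))
      = Matrix.fromBlocks
          (Matrix.diagonal fun j => Real.cos (τ * ω * Real.sqrt (-d j)))
          (Matrix.diagonal fun j => τ * sinc (τ * ω * Real.sqrt (-d j)))
          (Matrix.diagonal fun j =>
            -(ω * Real.sqrt (-d j)) * Real.sin (τ * ω * Real.sqrt (-d j)))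
          (Matrix.diagonal fun j => Real.cos (τ * ω * Real.sqrt (-d j))) := by
  have hV : (τ • Matrix.fromBlocks (0 : Matrix (Fin N) (Fin N) ℝ)
        (1 : Matrix (Fin N) (Fin N) ℝ)
        (ω ^ 2 • Matrix.diagonal d) (0 : Matrix (Fin N) (Fin N) ℝ))
      = psi N (fun j => A2 τ ω (d j)) := by
    rw [psi_apply, Matrix.fromBlocks_smul]
    ext i j
    cases i <;> cases j <;>
      simp [A2, Matrix.one_apply, Matrix.diagonal_apply, mul_ite] <;>
      split_ifs <;> ring
  rw [hV]
  erw [← map_exp (psi N) (psi_continuous N), Pi.exp_def]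
  have hexp : (fun j => NormedSpace.exp (A2 τ ω (d j)))
      = fun j => !![Real.cos (τ * ω * Real.sqrt (-d j)), τ * sinc (τ * ω * Real.sqrt (-d j));
          -(ω * Real.sqrt (-d j)) * Real.sin (τ * ω * Real.sqrt (-d j)),
          Real.cos (τ * ω * Real.sqrt (-d j))] := by
    funext j; exact exp_A2 τ ω (d j) (hd j) hω hτ
  erw [hexp, psi_apply]
  ext i j
  cases i <;> cases j <;> simp [Matrix.diagonal_apply]

end Final
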